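/- arXiv:1010.0920 — 3 statements merged into one kernel-verified Lean document; each statement's English description precedes it below -/
import Mathlib

section
/- Let x : ℝ → ℝⁿ be a smooth curve such that the 2k-th derivative of x vanishes identically (k ≥ 1) and x is parametrized by arc length, i.e., ‖x'(s)‖ = 1 for all s. Then x is a straight line: there exist constant vectors a₀, a₁ with ‖a₁‖ = 1 such that x(s) = a₁ s + a₀ for all s. -/
open Function

/-- Forward difference operator. -/
noncomputable def fdiff (h : ℝ) (g : ℝ → ℝ) : ℝ → ℝ := fun s => g (s + h) - g s

lemma fdiff_contDiff {g : ℝ → ℝ} (hg : ContDiff ℝ (⊤ : ℕ∞) g) (h : ℝ) (m : ℕ) :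
    ContDiff ℝ (⊤ : ℕ∞) ((fdiff h)^[m] g) := by
  induction m with
  | zero => simpa using hg
  | succ m ih =>
      rw [Function.iterate_succ_apply']
      exact (ih.comp (contDiff_id.add contDiff_const)).sub ih

lemma fdiff_bound {g : ℝ → ℝ} {M : ℝ} (hb : ∀ s, |g s| ≤ M) (h : ℝ) (m : ℕ) :
    ∀ s, |(fdiff h)^[m] g s| ≤ 2 ^ m * M := by
  induction m with
  | zero => simpa using hb
  | succ m ih =>
      intro s
      rw [Function.iterate_succ_apply']
      calc |(fdiff h)^[m] g (s + h) - (fdiff h)^[m] g s|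
          ≤ |(fdiff h)^[m] g (s + h)| + |(fdiff h)^[m] g s| := abs_sub _ _
        _ ≤ 2 ^ m * M + 2 ^ m * M := add_le_add (ih _) (ih _)
        _ = 2 ^ (m + 1) * M := by ring

lemma fdiff_deriv {g : ℝ → ℝ} (hg : Differentiable ℝ g) (h : ℝ) :
    deriv (fdiff h g) = fdiff h (deriv g) := by
  funext s
  have h1 : HasDerivAt (fun t : ℝ => g (t + h)) (deriv g (s + h)) s := by
    simpa [Function.comp_def] using HasDerivAt.comp s ((hg (s + h)).hasDerivAt) ((hasDerivAt_id s).add_const h)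
  exact (h1.sub (hg s).hasDerivAt).deriv

lemma fdiff_iterate_deriv {g : ℝ → ℝ} (hg : ContDiff ℝ (⊤ : ℕ∞) g) (h : ℝ) (m : ℕ) :
    deriv ((fdiff h)^[m] g) = (fdiff h)^[m] (deriv g) := by
  induction m generalizing g with
  | zero => simp
  | succ m ih =>
      rw [Function.iterate_succ_apply', Function.iterate_succ_apply',
        fdiff_deriv ((fdiff_contDiff hg h m).differentiable (by simp)), ih hg]

lemma fdiff_of_iteratedDeriv_const {K : ℝ} (m : ℕ) :
    ∀ (g : ℝ → ℝ), ContDiff ℝ (⊤ : ℕ∞) g → (∀ s, iteratedDeriv m g s = K) → ∀ (h s : ℝ),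
      (fdiff h)^[m] g s = K * h ^ m := by
  induction m with
  | zero =>
      intro g hg hK h s
      simpa using hK s
  | succ m ih =>
      intro g hg hK h s
      have hg' : ContDiff ℝ (⊤ : ℕ∞) (deriv g) := (contDiff_infty_iff_deriv.mp hg).2
      have h1 : ∀ s, iteratedDeriv m (deriv g) s = K := by
        intro s; rw [← iteratedDeriv_succ']; exact hK s
      have ih' := ih (deriv g) hg' h1 h
      set F := (fdiff h)^[m] g with hF
      have hFc : ContDiff ℝ (⊤ : ℕ∞) F := fdiff_contDiff hg h m
      have hdF : ∀ t, deriv F t = K * h ^ m := by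
        intro t
        rw [hF, fdiff_iterate_deriv hg]
        exact ih' t
      -- the function t ↦ F t - (K * h^m) * t has zero derivative
      have key : ∀ t, HasDerivAt (fun t => F t - (K * h ^ m) * t) 0 t := by
        intro t
        have h2 : HasDerivAt F (K * h ^ m) t := by
          rw [← hdF t]; exact (hFc.differentiable (by simp) t).hasDerivAt
        have h3 : HasDerivAt (fun t : ℝ => (K * h ^ m) * t) (K * h ^ m) t := by
          simpa using (hasDerivAt_id t).const_mul (K * h ^ m)
        simpa [Pi.sub_def] using h2.sub h3
      have hconst : ∀ a b : ℝ, F a - (K * h ^ m) * a = F b - (K * h ^ m) * b := by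
        intro a b
        exact is_const_of_deriv_eq_zero (fun t => (key t).differentiableAt)
          (fun t => (key t).deriv) a b
      have := hconst (s + h) s
      rw [Function.iterate_succ_apply']
      show F (s + h) - F s = K * h ^ (m + 1)
      have : F (s + h) - F s = K * h ^ m * h := by linarith [hconst (s + h) s]
      rw [this]; ring

lemma iteratedDeriv_clm_comp {E F : Type*} [NormedAddCommGroup E] [NormedSpace ℝ E]
    [NormedAddCommGroup F] [NormedSpace ℝ F]
    (L : E →L[ℝ] F) (m : ℕ) :
    ∀ (f : ℝ → E), ContDiff ℝ (⊤ : ℕ∞) f →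
      iteratedDeriv m (fun s => L (f s)) = fun s => L (iteratedDeriv m f s) := by
  induction m with
  | zero => intro f hf; simp
  | succ m ih =>
      intro f hf
      have hf' : ContDiff ℝ (⊤ : ℕ∞) (deriv f) := (contDiff_infty_iff_deriv.mp hf).2
      rw [iteratedDeriv_succ', iteratedDeriv_succ']
      have hder : deriv (fun s => L (f s)) = fun s => L (deriv f s) := by
        funext s
        exact (L.hasFDerivAt.comp_hasDerivAt s (hf.differentiable (by simp) s).hasDerivAt).deriv
      rw [hder, ih (deriv f) hf']

lemma contDiff_top_iteratedDeriv {E : Type*} [NormedAddCommGroup E] [NormedSpace ℝ E]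
    (m : ℕ) : ∀ (f : ℝ → E), ContDiff ℝ (⊤ : ℕ∞) f → ContDiff ℝ (⊤ : ℕ∞) (iteratedDeriv m f) := by
  induction m with
  | zero => intro f hf; simpa using hf
  | succ m ih =>
      intro f hf
      rw [iteratedDeriv_succ']
      exact ih _ (contDiff_infty_iff_deriv.mp hf).2

lemma step_down {E : Type*} [NormedAddCommGroup E] [InnerProductSpace ℝ E]
    (y : ℝ → E) (hy : ContDiff ℝ (⊤ : ℕ∞) y) (hnorm : ∀ s, ‖y s‖ = 1)
    (m : ℕ) (hm : 1 ≤ m) (h0 : iteratedDeriv (m + 1) y = 0) :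
    iteratedDeriv m y = 0 := by
  set c := iteratedDeriv m y 0 with hc
  have hdiff : Differentiable ℝ (iteratedDeriv m y) :=
    (contDiff_top_iteratedDeriv m y hy).differentiable (by simp)
  have hconst : ∀ s, iteratedDeriv m y s = c := by
    intro s
    refine is_const_of_deriv_eq_zero hdiff (fun t => ?_) s 0
    rw [← iteratedDeriv_succ, h0]; rfl
  set L := innerSL ℝ c with hL
  set g : ℝ → ℝ := fun s => L (y s) with hg
  have hgsmooth : ContDiff ℝ (⊤ : ℕ∞) g := L.contDiff.comp hy
  have hgK : ∀ s, iteratedDeriv m g s = ‖c‖ ^ 2 := by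
    intro s
    rw [hg, iteratedDeriv_clm_comp L m y hy]
    simp only [hconst s, hL, innerSL_apply_apply]
    rw [real_inner_self_eq_norm_sq]
  have hgb : ∀ s, |g s| ≤ ‖c‖ := by
    intro s
    calc |g s| ≤ ‖c‖ * ‖y s‖ := abs_real_inner_le_norm c (y s)
      _ = ‖c‖ := by rw [hnorm s, mul_one]
  have hczero : c = 0 := by
    by_contra hne
    have hcpos : 0 < ‖c‖ := norm_pos_iff.mpr hne
    set h : ℝ := max 1 ((2 ^ m * ‖c‖ + 1) / ‖c‖ ^ 2) with hh
    have h1 : (1 : ℝ) ≤ h := le_max_left _ _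
    have h2 : (2 ^ m * ‖c‖ + 1) / ‖c‖ ^ 2 ≤ h := le_max_right _ _
    have hval := fdiff_of_iteratedDeriv_const m g hgsmooth hgK h 0
    have hbd := fdiff_bound hgb h m 0
    rw [hval] at hbd
    have hhm : h ≤ h ^ m := le_self_pow₀ h1 (by omega)
    have h3 : 2 ^ m * ‖c‖ + 1 ≤ ‖c‖ ^ 2 * h := by
      rw [div_le_iff₀ (by positivity)] at h2
      linarith [h2]
    have h4 : ‖c‖ ^ 2 * h ≤ ‖c‖ ^ 2 * h ^ m := by
      apply mul_le_mul_of_nonneg_left hhm (by positivity)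
    have h5 : ‖c‖ ^ 2 * h ^ m ≤ 2 ^ m * ‖c‖ := by
      calc ‖c‖ ^ 2 * h ^ m ≤ |‖c‖ ^ 2 * h ^ m| := le_abs_self _
        _ ≤ 2 ^ m * ‖c‖ := hbd
    linarith
  funext s
  rw [hconst s, hczero]; rfl

theorem straight_line_of_iteratedDeriv_eq_zero
    (n k : ℕ) (hk : 1 ≤ k) (x : ℝ → EuclideanSpace ℝ (Fin n))
    (hx : ContDiff ℝ (⊤ : ℕ∞) x)
    (hder : iteratedDeriv (2 * k) x = 0)
    (hunit : ∀ s : ℝ, ‖deriv x s‖ = 1) :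
    ∃ (a₀ a₁ : EuclideanSpace ℝ (Fin n)), ‖a₁‖ = 1 ∧
      ∀ s : ℝ, x s = s • a₁ + a₀ := by
  set y := deriv x with hy
  have hx' : ContDiff ℝ (⊤ : ℕ∞) x := hx.of_le (by simp)
  have hysmooth : ContDiff ℝ (⊤ : ℕ∞) y := (contDiff_infty_iff_deriv.mp hx').2
  have h2k : iteratedDeriv (2 * k - 1) y = 0 := by
    have he : 2 * k = (2 * k - 1) + 1 := by omega
    rw [hy, ← iteratedDeriv_succ', ← he]; exact hder
  have desc : ∀ j, iteratedDeriv (1 + j) y = 0 → iteratedDeriv 1 y = 0 := by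
    intro j
    induction j with
    | zero => intro h; simpa using h
    | succ j ih =>
        intro h
        refine ih (step_down y hysmooth hunit (1 + j) (by omega) ?_)
        rw [show (1 + j) + 1 = 1 + (j + 1) by omega]; exact h
  have hd1 : iteratedDeriv 1 y = 0 := by
    refine desc (2 * k - 2) ?_
    rw [show 1 + (2 * k - 2) = 2 * k - 1 by omega]; exact h2k
  have yconst : ∀ s, y s = y 0 := by
    intro s
    refine is_const_of_deriv_eq_zero (hysmooth.differentiable (by simp)) (fun t => ?_) s 0
    rw [← iteratedDeriv_one, hd1]; rfl
  refine ⟨x 0, y 0, hunit 0, fun s => ?_⟩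
  have key : ∀ t, HasDerivAt (fun t : ℝ => x t - t • (y 0)) 0 t := by
    intro t
    have h1 : HasDerivAt x (y 0) t := by
      rw [← yconst t]; exact (hx'.differentiable (by simp) t).hasDerivAt
    have h2 : HasDerivAt (fun t : ℝ => t • (y 0)) (y 0) t := by
      simpa using (hasDerivAt_id t).smul_const (y 0)
    simpa [Pi.sub_def] using h1.sub h2
  have hconst : x s - s • (y 0) = x 0 - (0 : ℝ) • (y 0) :=
    is_const_of_deriv_eq_zero (fun t => (key t).differentiableAt)
      (fun t => (key t).deriv) s 0
  rw [zero_smul, sub_zero] at hconst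
  rw [← hconst]; abel
end

section
/- Let x : ℝ → ℝⁿ be a polynomial curve (each coordinate a polynomial in s) such that ‖x'(s)‖² = 1 for all s ∈ ℝ. Then x is affine: x(s) = a₁ s + a₀ with ‖a₁‖ = 1. -/
/-!
Every continuous linear functional `ℓ` turns the velocity `x'` into a real polynomial, namely the
derivative of the polynomial `ℓ ∘ x`. Unit speed bounds this polynomial by `‖ℓ‖`, and a bounded
real polynomial is constant. Since functionals separate points, `x'` is constant, so `x` is affine.
-/

open Polynomial Filter

theorem Polynomial.eval_eq_of_forall_abs_eval_le {p : ℝ[X]} {M : ℝ} (h : ∀ s, |p.eval s| ≤ M)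
    (s t : ℝ) : p.eval s = p.eval t := by
  have hdeg : p.degree ≤ 0 :=
    (isBoundedUnder_abs_atTop_iff p).1 ⟨M, eventually_map.2 (Eventually.of_forall h)⟩
  rw [eq_C_of_degree_le_zero hdeg, eval_C, eval_C]

theorem eq_smul_add_of_deriv_eq {E : Type*} [NormedAddCommGroup E] [NormedSpace ℝ E]
    {f : ℝ → E} {v : E} (hf : Differentiable ℝ f) (hf' : ∀ s, deriv f s = v) (s : ℝ) :
    f s = s • v + f 0 := by
  have hg : Differentiable ℝ fun t : ℝ => f t - t • v := by fun_prop
  have hg' : ∀ t, deriv (fun t : ℝ => f t - t • v) t = 0 := fun t => by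
    have hsmul : HasDerivAt (fun t : ℝ => t • v) v t := by
      simpa using (hasDerivAt_id t).smul_const v
    rw [((hf t).hasDerivAt.fun_sub hsmul).deriv, hf', sub_self]
  have hconst := is_const_of_deriv_eq_zero hg hg' s 0
  rw [zero_smul, sub_zero] at hconst
  rw [← hconst, add_sub_cancel]

section PolynomialCurve

variable {E : Type*} [NormedAddCommGroup E] [NormedSpace ℝ E] (a : ℕ → E) (m : ℕ)

theorem differentiable_sum_pow_smul :
    Differentiable ℝ fun s : ℝ => ∑ i ∈ Finset.range m, s ^ i • a i := by
  fun_prop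

theorem map_sum_pow_smul_eq_eval (ℓ : StrongDual ℝ E) (s : ℝ) :
    ℓ (∑ i ∈ Finset.range m, s ^ i • a i)
      = (∑ i ∈ Finset.range m, C (ℓ (a i)) * X ^ i).eval s := by
  rw [map_sum, eval_finsetSum]
  refine Finset.sum_congr rfl fun i _ => ?_
  rw [map_smul, smul_eq_mul, eval_mul, eval_C, eval_pow, eval_X, mul_comm]

theorem map_deriv_sum_pow_smul_eq_eval_derivative (ℓ : StrongDual ℝ E) (s : ℝ) :
    ℓ (deriv (fun s : ℝ => ∑ i ∈ Finset.range m, s ^ i • a i) s)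
      = (∑ i ∈ Finset.range m, C (ℓ (a i)) * X ^ i).derivative.eval s := by
  have hcomp := ℓ.hasFDerivAt.comp_hasDerivAt s
    (differentiable_sum_pow_smul a m s).hasDerivAt
  have hpoly : (ℓ ∘ fun s : ℝ => ∑ i ∈ Finset.range m, s ^ i • a i)
      = fun s => (∑ i ∈ Finset.range m, C (ℓ (a i)) * X ^ i).eval s :=
    funext (map_sum_pow_smul_eq_eval a m ℓ)
  rw [hpoly] at hcomp
  exact hcomp.unique (Polynomial.hasDerivAt _ s)

theorem deriv_sum_pow_smul_eq_of_norm_le {M : ℝ}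
    (hM : ∀ s, ‖deriv (fun s : ℝ => ∑ i ∈ Finset.range m, s ^ i • a i) s‖ ≤ M) (s : ℝ) :
    deriv (fun s : ℝ => ∑ i ∈ Finset.range m, s ^ i • a i) s
      = deriv (fun s : ℝ => ∑ i ∈ Finset.range m, s ^ i • a i) 0 := by
  refine (SeparatingDual.eq_iff_forall_dual_eq (R := ℝ)).2 fun ℓ => ?_
  simp only [map_deriv_sum_pow_smul_eq_eval_derivative]
  refine eval_eq_of_forall_abs_eval_le (M := ‖ℓ‖ * M) (fun t => ?_) s 0
  rw [← map_deriv_sum_pow_smul_eq_eval_derivative, ← Real.norm_eq_abs]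
  exact (ℓ.le_opNorm _).trans (mul_le_mul_of_nonneg_left (hM t) (norm_nonneg ℓ))

end PolynomialCurve

theorem unit_speed_polynomial_curve_is_affine
    (n d : ℕ) (a : ℕ → EuclideanSpace ℝ (Fin n))
    (x : ℝ → EuclideanSpace ℝ (Fin n))
    (hx : ∀ s : ℝ, x s = ∑ i ∈ Finset.range (d + 1), s ^ i • a i)
    (hunit : ∀ s : ℝ, (inner ℝ (deriv x s) (deriv x s) : ℝ) = 1) :
    ∃ (a₀ a₁ : EuclideanSpace ℝ (Fin n)), ‖a₁‖ = 1 ∧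
      ∀ s : ℝ, x s = s • a₁ + a₀ := by
  have hspeed : ∀ s, ‖deriv x s‖ = 1 := fun s => by
    have h := hunit s
    rw [real_inner_self_eq_norm_sq] at h
    exact (pow_eq_one_iff_of_nonneg (norm_nonneg _) two_ne_zero).1 h
  obtain rfl : x = fun s => ∑ i ∈ Finset.range (d + 1), s ^ i • a i := funext hx
  refine ⟨_, _, hspeed 0, eq_smul_add_of_deriv_eq (differentiable_sum_pow_smul a _) ?_⟩
  exact deriv_sum_pow_smul_eq_of_norm_le a _ fun s => (hspeed s).le
end

section
/- Suppose p : ℝ → ℝ is a polynomial of the form p(s) = ⟨∑_{i=1}^{m} i·aᵢ s^{i-1}, ∑_{i=1}^{m} i·aᵢ s^{i-1}⟩ for vectors aᵢ ∈ ℝⁿ, and p(s) = 1 for all s. Then aᵢ = 0 for all i ≥ 2 and ‖a₁‖ = 1. -/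
/-!
Applying any continuous linear functional to `s ↦ ∑ i * s ^ (i - 1) • aᵢ` gives a scalar
polynomial bounded on `ℝ`, because the norm is constantly `1`. A bounded polynomial is constant,
since a nonconstant one tends to infinity in norm. Functionals separate points, so every
coefficient `i • aᵢ` with `i ≥ 2` vanishes, and evaluating at `s = 0` leaves `‖a₁‖ = 1`.
-/

open Finset Polynomial

theorem Polynomial.degree_le_zero_of_forall_norm_eval_le {𝕜 : Type*} [NontriviallyNormedField 𝕜]
    {p : 𝕜[X]} {C : ℝ} (h : ∀ x, ‖p.eval x‖ ≤ C) : p.degree ≤ 0 := by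
  by_contra! hp
  obtain ⟨x, hx⟩ :=
    ((p.tendsto_norm_atTop hp tendsto_norm_cobounded_atTop).eventually_gt_atTop C).exists
  exact (h x).not_gt hx

theorem eq_zero_of_forall_norm_sum_range_mul_pow_le {𝕜 : Type*} [NontriviallyNormedField 𝕜]
    {c : ℕ → 𝕜} {N : ℕ} {C : ℝ} (h : ∀ x, ‖∑ i ∈ range N, c i * x ^ i‖ ≤ C)
    {k : ℕ} (hkN : k < N) (hk : k ≠ 0) : c k = 0 := by
  let p : 𝕜[X] := ∑ i ∈ range N, Polynomial.C (c i) * X ^ i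
  have hcoeff : p.coeff k = c k := by simp [p, hkN]
  have hdeg : p.degree ≤ 0 := degree_le_zero_of_forall_norm_eval_le fun x => by
    simpa [p, eval_finsetSum] using h x
  rw [← hcoeff, eq_C_of_degree_le_zero hdeg, coeff_C_of_ne_zero hk]

theorem eq_zero_of_forall_norm_sum_range_pow_smul_le {𝕜 E : Type*} [RCLike 𝕜]
    [NormedAddCommGroup E] [NormedSpace 𝕜 E] {b : ℕ → E} {N : ℕ} {C : ℝ}
    (h : ∀ x : 𝕜, ‖∑ i ∈ range N, x ^ i • b i‖ ≤ C) {k : ℕ} (hkN : k < N) (hk : k ≠ 0) :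
    b k = 0 := by
  refine SeparatingDual.eq_zero_of_forall_dual_eq_zero (R := 𝕜) fun f => ?_
  refine eq_zero_of_forall_norm_sum_range_mul_pow_le (c := fun i => f (b i)) (C := ‖f‖ * C)
    (fun x => ?_) hkN hk
  calc ‖∑ i ∈ range N, f (b i) * x ^ i‖ = ‖f (∑ i ∈ range N, x ^ i • b i)‖ := by
        simp [map_sum, mul_comm]
    _ ≤ ‖f‖ * C := (f.le_opNorm _).trans (by gcongr; exact h x)

theorem coefficients_vanish_of_unit_norm_poly
    (n m : ℕ) (a : ℕ → EuclideanSpace ℝ (Fin n))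
    (h : ∀ s : ℝ,
      (inner ℝ (∑ i ∈ Finset.Icc 1 m, ((i : ℝ) * s ^ (i - 1)) • a i)
             (∑ i ∈ Finset.Icc 1 m, ((i : ℝ) * s ^ (i - 1)) • a i) : ℝ) = 1) :
    (∀ i, 2 ≤ i → i ≤ m → a i = 0) ∧ ‖a 1‖ = 1 := by
  have hsum (s : ℝ) : ∑ i ∈ Icc 1 m, ((i : ℝ) * s ^ (i - 1)) • a i
      = ∑ k ∈ range m, s ^ k • ((k + 1 : ℝ) • a (k + 1)) := by
    rw [← Ico_add_one_right_eq_Icc, sum_Ico_eq_sum_range, add_tsub_cancel_right]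
    refine sum_congr rfl fun k _ => ?_
    rw [add_comm 1 k, add_tsub_cancel_right, mul_comm, mul_smul]
    push_cast; rfl
  have hnorm (s : ℝ) : ‖∑ k ∈ range m, s ^ k • ((k + 1 : ℝ) • a (k + 1))‖ = 1 := by
    rw [← hsum, ← pow_eq_one_iff_of_nonneg (norm_nonneg _) two_ne_zero,
      ← real_inner_self_eq_norm_sq, h]
  refine ⟨fun i hi him => ?_, ?_⟩
  · obtain ⟨k, rfl⟩ : ∃ k, i = k + 1 := ⟨i - 1, by omega⟩
    have hk := eq_zero_of_forall_norm_sum_range_pow_smul_le (fun s => (hnorm s).le)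
      (by omega : k < m) (by omega)
    simpa [smul_eq_zero, Nat.cast_add_one_ne_zero] using hk
  · obtain ⟨m, rfl⟩ : ∃ m', m = m' + 1 := Nat.exists_eq_add_one_of_ne_zero (by
      rintro rfl; simpa using h 0)
    simpa [sum_range_succ'] using hnorm 0
end
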